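/- Let A be a symmetric n×n real matrix, and let d₁,…,d_s ≥ 0 with each d_i ≤ B for some B > 0, with multiplicities m₁,…,m_s and an extra block of size m_{s+1} (Σ m_i = n). Suppose A commutes with D = diag(d₁ I_{m₁}, …, d_s I_{m_s}, 0_{m_{s+1}}) (the curvature-adapted condition). Then the number of t ∈ (0, π/B) for which the matrix diag(d₁cot(t d₁) I_{m₁}, …, d_s cot(t d_s) I_{m_s}, (1/t) I_{m_{s+1}}) − A is singular is at most (s+1)·n, where d_i cot(t d_i) is interpreted as 1/t when d_i = 0. -/

import Mathlib

/-!
Since `A` commutes with `D = diagonal δ`, it preserves each eigenspace `{δ = v}` of `D`. Projecting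
a kernel vector of `diag(g(δ i)) - A` onto a suitable eigenspace of `D` produces an eigenvector
of `A` with eigenvalue `g v`, for some value `v` of `δ`. For each of the at most `s + 1` values `v`,
the function `t ↦ v cot (t v)` (read as `1 / t` when `v = 0`) is strictly decreasing on
`(0, π / B)`, so it takes each of the at most `n` eigenvalues of `A` at most once.
-/

open Set Matrix Polynomial

namespace Matrix

variable {ι R : Type*} [Fintype ι] [DecidableEq ι] [CommRing R]

lemma apply_eq_zero_of_commute_diagonal [NoZeroDivisors R] {A : Matrix ι ι R} {d : ι → R}
    (h : Commute A (diagonal d)) {i j : ι} (hij : d i ≠ d j) : A i j = 0 := by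
  have hij' : A i j * d j = d i * A i j := by
    simpa only [mul_diagonal, diagonal_mul] using congrFun (congrFun h.eq i) j
  have : A i j * (d j - d i) = 0 := by rw [mul_sub, hij', mul_comm, sub_self]
  exact (mul_eq_zero.mp this).resolve_right (sub_ne_zero.mpr hij.symm)

lemma commute_diagonal_comp [NoZeroDivisors R] {A : Matrix ι ι R} {d : ι → R}
    (h : Commute A (diagonal d)) (f : R → R) : Commute A (diagonal (f ∘ d)) := by
  show A * _ = _ * A
  ext i j
  rw [mul_diagonal, diagonal_mul, Function.comp_apply, Function.comp_apply]
  by_cases hij : d i = d j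
  · rw [hij, mul_comm]
  · rw [apply_eq_zero_of_commute_diagonal h hij, zero_mul, mul_zero]

lemma exists_isRoot_charpoly_of_det_diagonal_comp_sub_eq_zero [IsDomain R] {A : Matrix ι ι R}
    {d : ι → R} (h : Commute A (diagonal d)) (g : R → R) (hdet : (diagonal (g ∘ d) - A).det = 0) :
    ∃ i, A.charpoly.IsRoot (g (d i)) := by
  classical
  obtain ⟨x, hx0, hx⟩ := exists_mulVec_eq_zero_iff.mpr hdet
  obtain ⟨i, hi⟩ := Function.ne_iff.mp hx0
  refine ⟨i, ?_⟩
  set P : Matrix ι ι R := diagonal ((fun a => if a = d i then 1 else 0) ∘ d) with hP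
  have hPx : P *ᵥ x ≠ 0 := fun h0 => hi (by simpa [hP, mulVec_diagonal] using congrFun h0 i)
  have hscalar : scalar ι (g (d i)) * P = diagonal (g ∘ d) * P := by
    rw [scalar_apply, hP, diagonal_mul_diagonal, diagonal_mul_diagonal]
    congr 1
    funext j
    by_cases hj : d j = d i <;> simp [hj]
  have hfac : (scalar ι (g (d i)) - A) * P = P * (diagonal (g ∘ d) - A) := by
    rw [sub_mul, mul_sub, hscalar, (commute_diagonal _ _).eq, (commute_diagonal_comp h _).eq]
  rw [IsRoot, eval_charpoly]
  exact exists_mulVec_eq_zero_iff.mp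
    ⟨P *ᵥ x, hPx, by rw [mulVec_mulVec, hfac, ← mulVec_mulVec, hx, mulVec_zero]⟩

lemma card_roots_toFinset_charpoly_le [IsDomain R] [DecidableEq R] (A : Matrix ι ι R) :
    A.charpoly.roots.toFinset.card ≤ Fintype.card ι :=
  calc A.charpoly.roots.toFinset.card ≤ Multiset.card A.charpoly.roots :=
        Multiset.toFinset_card_le _
    _ ≤ A.charpoly.natDegree := card_roots' _
    _ = Fintype.card ι := charpoly_natDegree_eq_dim A

end Matrix

lemma Set.exists_finset_card_le_mul_of_injOn {α β γ : Type*} [DecidableEq β] [Nonempty β]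
    {T : Set β} (V : Finset α) (E : Finset γ) (g : α → β → γ)
    (hinj : ∀ v ∈ V, InjOn (g v) T) (hcover : ∀ t ∈ T, ∃ v ∈ V, g v t ∈ E) :
    ∃ S : Finset β, S.card ≤ V.card * E.card ∧ T ⊆ S := by
  refine ⟨(V ×ˢ E).image fun p => Function.invFunOn (g p.1) T p.2,
    Finset.card_image_le.trans (Finset.card_product V E).le, fun t ht => ?_⟩
  obtain ⟨v, hv, hE⟩ := hcover t ht
  exact Finset.mem_image.mpr
    ⟨(v, g v t), Finset.mem_product.mpr ⟨hv, hE⟩, (hinj v hv).leftInvOn_invFunOn ht⟩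

namespace Real

lemma cot_eq_tan_pi_div_two_sub (x : ℝ) : cot x = tan (π / 2 - x) := by
  rw [tan_pi_div_two_sub, tan_inv_eq_cot]

lemma strictAntiOn_cot : StrictAntiOn cot (Ioo 0 π) := by
  intro x hx y hy hxy
  rw [cot_eq_tan_pi_div_two_sub, cot_eq_tan_pi_div_two_sub]
  exact strictMonoOn_tan ⟨by linarith [hy.2], by linarith [hy.1]⟩
    ⟨by linarith [hx.2], by linarith [hx.1]⟩ (by linarith)

/-- `v cot (t v)`, extended by its limit `1 / t` at `v = 0`. -/
noncomputable def scaledCot (v t : ℝ) : ℝ := if v = 0 then 1 / t else v * cot (t * v)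

lemma strictAntiOn_scaledCot {v B : ℝ} (hv0 : 0 ≤ v) (hvB : v ≤ B) :
    StrictAntiOn (scaledCot v) (Ioo 0 (π / B)) := by
  intro t₁ ht₁ t₂ ht₂ ht
  unfold scaledCot
  rcases hv0.eq_or_lt with rfl | hv
  · simpa using inv_strictAntiOn ht₁.1 ht₂.1 ht
  have hvB' : π / B ≤ π / v := div_le_div_of_nonneg_left pi_pos.le hv hvB
  have hmem (t : ℝ) (ht : t ∈ Ioo 0 (π / B)) : t * v ∈ Ioo 0 π :=
    ⟨mul_pos ht.1 hv, (lt_div_iff₀ hv).mp (ht.2.trans_le hvB')⟩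
  rw [if_neg hv.ne', if_neg hv.ne']
  exact mul_lt_mul_of_pos_left
    (strictAntiOn_cot (hmem t₁ ht₁) (hmem t₂ ht₂) (mul_lt_mul_of_pos_right ht hv)) hv

end Real

theorem stmt3_general {n : ℕ} (B : ℝ)
    (δ : Fin n → ℝ) (hδ0 : ∀ i, 0 ≤ δ i) (hδB : ∀ i, δ i ≤ B)
    (A : Matrix (Fin n) (Fin n) ℝ)
    (hcomm : A * Matrix.diagonal δ = Matrix.diagonal δ * A) :
    ∃ S : Finset ℝ,
      S.card ≤ (((Finset.univ.image δ).erase 0).card + 1) * n ∧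
      ∀ t ∈ Set.Ioo (0 : ℝ) (Real.pi / B),
        (Matrix.diagonal (fun i => if δ i = 0 then 1 / t else δ i * Real.cot (t * δ i))
            - A).det = 0 → t ∈ S := by
  classical
  obtain ⟨S, hcard, hS⟩ := Set.exists_finset_card_le_mul_of_injOn
    (T := {t | t ∈ Ioo 0 (Real.pi / B) ∧
      (diagonal ((fun v => Real.scaledCot v t) ∘ δ) - A).det = 0})
    (Finset.univ.image δ) A.charpoly.roots.toFinset Real.scaledCot
    (fun v hv => by
      obtain ⟨i, -, rfl⟩ := Finset.mem_image.mp hv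
      exact (Real.strictAntiOn_scaledCot (hδ0 i) (hδB i)).injOn.mono fun t ht => ht.1)
    (fun t ht => by
      obtain ⟨i, hi⟩ := exists_isRoot_charpoly_of_det_diagonal_comp_sub_eq_zero hcomm _ ht.2
      exact ⟨δ i, Finset.mem_image_of_mem δ (Finset.mem_univ i),
        Multiset.mem_toFinset.mpr ((mem_roots A.charpoly_monic.ne_zero).mpr hi)⟩)
  refine ⟨S, hcard.trans (Nat.mul_le_mul ?_ ?_), fun t ht hdet => hS ⟨ht, hdet⟩⟩
  · have := Finset.pred_card_le_card_erase (s := Finset.univ.image δ) (a := 0)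
    omega
  · simpa using card_roots_toFinset_charpoly_le A

/-- linear-algebraic core of Corollary 2.5. `A` is a symmetric `n×n`
matrix commuting with the diagonal matrix of values `δ i` (`0 ≤ δ i ≤ B`, the zero
entries forming the extra block). The number of `t ∈ (0, π/B)` for which
`diag(δᵢ cot(t δᵢ)) − A` (with `δᵢ cot(t δᵢ)` read as `1/t` when `δᵢ = 0`)
is singular is at most `(s+1)·n`, where `s` is the number of distinct nonzero
values among the `δ i`. -/
theorem stmt3 {n : ℕ} (B : ℝ) (hB : 0 < B)
    (δ : Fin n → ℝ) (hδ0 : ∀ i, 0 ≤ δ i) (hδB : ∀ i, δ i ≤ B)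
    (A : Matrix (Fin n) (Fin n) ℝ) (hA : A.IsSymm)
    (hcomm : A * Matrix.diagonal δ = Matrix.diagonal δ * A) :
    ∃ S : Finset ℝ,
      S.card ≤ (((Finset.univ.image δ).erase 0).card + 1) * n ∧
      ∀ t ∈ Set.Ioo (0 : ℝ) (Real.pi / B),
        (Matrix.diagonal (fun i => if δ i = 0 then 1 / t else δ i * Real.cot (t * δ i))
            - A).det = 0 → t ∈ S :=
  stmt3_general B δ hδ0 hδB A hcomm
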